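/- Let a group Γ act by automorphisms α on a countable abelian group Σ in which every nontrivial element has order 2, and let G = Σ ⋊ Γ be the semidirect product. Let C be an abelian group that is 2-divisible and has no elements of order 2. Then the map Ψ : H²(Γ,C) → H²(G,C) induced by sending ω to the cocycle (Ψω)((a,g),(b,h)) = ω(g,h) is a group isomorphism. -/

import Mathlib

/-- A normalized 2-cocycle on a group `G` with values in an abelian group `C`. -/
def IsCocycle {G C : Type*} [Group G] [AddCommGroup C] (Ω : G → G → C) : Prop :=
  (∀ g h k, Ω g h + Ω (g * h) k = Ω g (h * k) + Ω h k) ∧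
  (∀ g, Ω g 1 = 0) ∧ (∀ g, Ω 1 g = 0)

/-- A 2-coboundary on a group `G` with values in an abelian group `C`. -/
def IsCoboundary {G C : Type*} [Group G] [AddCommGroup C] (Ω : G → G → C) : Prop :=
  ∃ F : G → C, F 1 = 0 ∧ ∀ g h, Ω g h = F g + F h - F (g * h)

/-!
On the subgroup `Σ` every cocycle is symmetric (its antisymmetric part is additive in each
variable and hence killed by `2`), and then `a ↦ Ω(a,a)/2` is a primitive, so the restriction
of a cocycle `Ω` on `G = Σ ⋊ Γ` to `Σ` is a coboundary. Correcting `Ω` by a coboundary one may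
assume that `Ω` vanishes on `Σ × Σ` and on `Σ × Γ`; the cocycle identity then forces `Ω` to
vanish on `Γ × Σ` as well (again by additivity and the absence of 2-torsion) and finally to
depend only on the `Γ`-components, i.e. to be inflated from its restriction to `Γ`.
-/

section Cocycle

variable {G H C : Type*} [Group G] [Group H] [AddCommGroup C]

theorem IsCocycle.comp {Ω : G → G → C} (hΩ : IsCocycle Ω) (f : H →* G) :
    IsCocycle fun a b => Ω (f a) (f b) := by
  obtain ⟨hassoc, hright, hleft⟩ := hΩ
  exact ⟨fun a b c => by simpa only [map_mul] using hassoc (f a) (f b) (f c),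
    fun a => by simpa only [map_one] using hright (f a),
    fun a => by simpa only [map_one] using hleft (f a)⟩

theorem IsCoboundary.comp {Ω : G → G → C} (hΩ : IsCoboundary Ω) (f : H →* G) :
    IsCoboundary fun a b => Ω (f a) (f b) := by
  obtain ⟨F, hF1, hF⟩ := hΩ
  exact ⟨fun a => F (f a), by simpa only [map_one] using hF1,
    fun a b => by simpa only [map_mul] using hF (f a) (f b)⟩

theorem IsCocycle.sub_coboundary {Ω : G → G → C} (hΩ : IsCocycle Ω) {F : G → C}
    (hF : F 1 = 0) :
    IsCocycle fun x y => Ω x y - (F x + F y - F (x * y)) := by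
  obtain ⟨hassoc, hright, hleft⟩ := hΩ
  refine ⟨fun g h k => ?_, fun g => by simp [hright g, hF], fun g => by simp [hleft g, hF]⟩
  simp only [mul_assoc]
  linear_combination (norm := abel1) hassoc g h k

end Cocycle

section ExponentTwo

variable {A C : Type*} [CommGroup A] [AddCommGroup C] {β : A → A → C}

theorem eq_of_add_self_eq_add_self (hno2 : ∀ c : C, c + c = 0 → c = 0) {x y : C}
    (h : x + x = y + y) : x = y :=
  sub_eq_zero.mp (hno2 _ (by linear_combination (norm := abel1) h))

theorem IsCocycle.symm_of_sq_eq_one (hA : ∀ a : A, a * a = 1)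
    (hno2 : ∀ c : C, c + c = 0 → c = 0) (hβ : IsCocycle β) (a b : A) : β a b = β b a := by
  obtain ⟨hassoc, hright, hleft⟩ := hβ
  have antisymm_mul : ∀ a a' k : A,
      β (a * a') k - β k (a * a') = (β a k - β k a) + (β a' k - β k a') := by
    intro a a' k
    have h₁ := hassoc a a' k
    have h₂ := hassoc k a a'
    have h₃ := hassoc a k a'
    rw [mul_comm k a] at h₂
    rw [mul_comm k a'] at h₃
    linear_combination (norm := abel1) h₁ + h₂ - h₃
  have h := antisymm_mul a a b
  rw [hA a, hleft b, hright b] at h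
  exact sub_eq_zero.mp (hno2 _ (by linear_combination (norm := abel1) -h))

theorem IsCocycle.add_self_eq_of_sq_eq_one (hA : ∀ a : A, a * a = 1)
    (hno2 : ∀ c : C, c + c = 0 → c = 0) (hβ : IsCocycle β) (a b : A) :
    β a b + β a b = β a a + β b b - β (a * b) (a * b) := by
  have h₁ := hβ.1 a b (a * b)
  have h₂ := hβ.1 b b a
  rw [show b * (a * b) = a by rw [mul_left_comm, hA b, mul_one]] at h₁
  rw [hA b, hβ.2.2 a, mul_comm b a, hβ.symm_of_sq_eq_one hA hno2 b a] at h₂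
  linear_combination (norm := abel1) h₁ - h₂

theorem IsCocycle.isCoboundary_of_sq_eq_one (hA : ∀ a : A, a * a = 1)
    (h2div : ∀ c : C, ∃ d : C, d + d = c) (hno2 : ∀ c : C, c + c = 0 → c = 0)
    (hβ : IsCocycle β) : IsCoboundary β := by
  choose half hhalf using h2div
  refine ⟨fun a => half (β a a), ?_, fun a b => ?_⟩
  · exact hno2 _ (by rw [hhalf, hβ.2.1])
  · refine eq_of_add_self_eq_add_self hno2 ?_
    rw [hβ.add_self_eq_of_sq_eq_one hA hno2 a b, ← hhalf (β a a), ← hhalf (β b b),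
      ← hhalf (β (a * b) (a * b))]
    abel

end ExponentTwo

theorem SemidirectProduct.inr_mul_inl {N G : Type*} [Group N] [Group G] {φ : G →* MulAut N}
    (g : G) (b : N) : (inr g * inl b : N ⋊[φ] G) = inl (φ g b) * inr g := by
  ext <;> simp

namespace IsCocycle

open SemidirectProduct

variable {N G C : Type*} [Group N] [Group G] [AddCommGroup C] {φ : G →* MulAut N}
  {Ω : N ⋊[φ] G → N ⋊[φ] G → C}

section Vanishing

variable (hΩ : IsCocycle Ω) (hll : ∀ a b, Ω (inl a) (inl b) = 0)
  (hlr : ∀ a g, Ω (inl a) (inr g) = 0)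
include hΩ hll hlr

theorem apply_inl_eq_zero (a : N) (y : N ⋊[φ] G) : Ω (inl a) y = 0 := by
  have h := hΩ.1 (inl a) (inl y.left) (inr y.right)
  rw [inl_left_mul_inr_right, ← map_mul, hll, hlr, hlr] at h
  linear_combination (norm := abel1) -h

theorem apply_eq_apply_inr_right (x y : N ⋊[φ] G) : Ω x y = Ω (inr x.right) y := by
  have h := hΩ.1 (inl x.left) (inr x.right) y
  rw [inl_left_mul_inr_right, hlr, hΩ.apply_inl_eq_zero hll hlr] at h
  linear_combination (norm := abel1) h

theorem apply_inr_inl_eq_zero (hN : ∀ a : N, a * a = 1) (hno2 : ∀ c : C, c + c = 0 → c = 0)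
    (g : G) (b : N) : Ω (inr g) (inl b) = 0 := by
  have additive : ∀ b b' : N,
      Ω (inr g) (inl (b * b')) = Ω (inr g) (inl b) + Ω (inr g) (inl b') := by
    intro b b'
    have h := hΩ.1 (inr g) (inl b) (inl b')
    rw [hll, ← map_mul, hΩ.apply_eq_apply_inr_right hll hlr (inr g * inl b)] at h
    simp only [mul_right, right_inr, right_inl, mul_one] at h
    linear_combination (norm := abel1) -h
  have h := additive b b
  rw [hN b, map_one, hΩ.2.1] at h
  exact hno2 _ h.symm

theorem apply_eq_apply_inr_inr (hrl : ∀ g b, Ω (inr g) (inl b) = 0) (x y : N ⋊[φ] G) :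
    Ω x y = Ω (inr x.right) (inr y.right) := by
  have h := hΩ.1 (inr x.right) (inl y.left) (inr y.right)
  rw [inl_left_mul_inr_right, hrl, hlr, inr_mul_inl,
    hΩ.apply_eq_apply_inr_right hll hlr (inl _ * inr _)] at h
  simp only [mul_right, right_inl, right_inr, one_mul] at h
  rw [hΩ.apply_eq_apply_inr_right hll hlr]
  linear_combination (norm := abel1) -h

end Vanishing

/-- The correction `E` kills `Ω` on `N × N` (where it is a primitive of the restriction) and on
`N × G` (through the term `Ω (inl a) (inr g)`). -/
theorem exists_cohomologous_inflation (hN : ∀ a : N, a * a = 1)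
    (hno2 : ∀ c : C, c + c = 0 → c = 0) (hΩ : IsCocycle Ω)
    (hres : IsCoboundary fun a b : N => Ω (inl a) (inl b)) :
    ∃ ω : G → G → C, IsCocycle ω ∧
      IsCoboundary fun x y : N ⋊[φ] G => Ω x y - ω x.right y.right := by
  obtain ⟨F, hF1, hF⟩ := hres
  set E : N ⋊[φ] G → C := fun x => F x.left - Ω (inl x.left) (inr x.right) with hE
  have hE1 : E 1 = 0 := by simp [hE, hF1, hΩ.2.1]
  set Ω' := fun x y => Ω x y - (E x + E y - E (x * y)) with hΩ'
  have hcoc : IsCocycle Ω' := hΩ.sub_coboundary hE1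
  have hll : ∀ a b, Ω' (inl a) (inl b) = 0 := fun a b => by
    simp [hΩ', hE, hΩ.2.1, hF]
  have hlr : ∀ a g, Ω' (inl a) (inr g) = 0 := fun a g => by
    simp [hΩ', hE, hΩ.2.1, hΩ.2.2, hF1]
  have hrl := hcoc.apply_inr_inl_eq_zero hll hlr hN hno2
  refine ⟨fun g h => Ω' (inr g) (inr h), hcoc.comp inr, E, hE1, fun x y => ?_⟩
  show Ω x y - Ω' (inr x.right) (inr y.right) = _
  rw [← hcoc.apply_eq_apply_inr_inr hll hlr hrl x y]
  simp only [hΩ']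
  abel

end IsCocycle

theorem secondCohomology_semidirect_exponentTwo_iso_general
    {Γ Sg C : Type*} [Group Γ] [CommGroup Sg] [AddCommGroup C]
    (hSg : ∀ a : Sg, a * a = 1) (α : Γ →* MulAut Sg)
    (h2div : ∀ c : C, ∃ d : C, d + d = c)
    (hno2 : ∀ c : C, c + c = 0 → c = 0) :
    (∀ ω : Γ → Γ → C, IsCocycle ω →
      IsCocycle (fun x y : Sg ⋊[α] Γ => ω x.right y.right))
    ∧
    (∀ ω : Γ → Γ → C, IsCocycle ω →
      (IsCoboundary (fun x y : Sg ⋊[α] Γ => ω x.right y.right) ↔ IsCoboundary ω))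
    ∧
    (∀ Ω : (Sg ⋊[α] Γ) → (Sg ⋊[α] Γ) → C, IsCocycle Ω →
      ∃ ω : Γ → Γ → C, IsCocycle ω ∧
        IsCoboundary (fun x y : Sg ⋊[α] Γ => Ω x y - ω x.right y.right)) := by
  refine ⟨fun ω hω => hω.comp SemidirectProduct.rightHom, fun ω _ => ?_, fun Ω hΩ => ?_⟩
  · exact ⟨fun h => h.comp SemidirectProduct.inr, fun h => h.comp SemidirectProduct.rightHom⟩
  · exact hΩ.exists_cohomologous_inflation hSg hno2
      ((hΩ.comp SemidirectProduct.inl).isCoboundary_of_sq_eq_one hSg h2div hno2)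

/-- Let the group `Γ` act by automorphisms `α` on a countable abelian group `Σ` in which
every nontrivial element has order 2, let `G = Σ ⋊ Γ` and let `C` be a 2-divisible abelian
group with no elements of order 2. Then `Ψ : H²(Γ,C) → H²(G,C)`,
`(Ψω)((a,g),(b,h)) = ω(g,h)`, is a group isomorphism. Expressed at the level of cocycles:
`Ψω` is a cocycle; `Ψω` is a coboundary iff `ω` is (well-definedness and injectivity); and
every cocycle on `G` is cohomologous to some `Ψω` (surjectivity). -/
theorem secondCohomology_semidirect_exponentTwo_iso
    {Γ Sg C : Type*} [Group Γ] [CommGroup Sg] [Countable Sg] [AddCommGroup C]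
    (hSg : ∀ a : Sg, a * a = 1) (α : Γ →* MulAut Sg)
    (h2div : ∀ c : C, ∃ d : C, d + d = c)
    (hno2 : ∀ c : C, c + c = 0 → c = 0) :
    (∀ ω : Γ → Γ → C, IsCocycle ω →
      IsCocycle (fun x y : Sg ⋊[α] Γ => ω x.right y.right))
    ∧
    (∀ ω : Γ → Γ → C, IsCocycle ω →
      (IsCoboundary (fun x y : Sg ⋊[α] Γ => ω x.right y.right) ↔ IsCoboundary ω))
    ∧
    (∀ Ω : (Sg ⋊[α] Γ) → (Sg ⋊[α] Γ) → C, IsCocycle Ω →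
      ∃ ω : Γ → Γ → C, IsCocycle ω ∧
        IsCoboundary (fun x y : Sg ⋊[α] Γ => Ω x y - ω x.right y.right)) :=
  secondCohomology_semidirect_exponentTwo_iso_general hSg α h2div hno2
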